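/- In the undiscounted, fully positively correlated limiting setup (γ=1), for any ρ ∈ [0,1] the variance ratio R_1(N) = (N + ρ(N² − N)) / (A + ρB), where A = (1/N²)Σ_{j=1}^N j² and B = ((1/N)Σ_{j=1}^N j)² − A, satisfies 1 ≤ R_1(N) < 4 for all N ≥ 1. -/

import Mathlib

/-!
With the weights `w_k = (N - k) / N`, both `A = ∑ w_k²` and `B = ∑_{k ≠ l} w_k w_l` have
closed forms in `n = N`. The bounds then hold term by term: `A ≤ n < 4A` and
`B ≤ n² - n ≤ 4B`, so for every `ρ ≥ 0` we get `A + ρB ≤ n + ρ(n² - n) < 4(A + ρB)`.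
-/

open Finset

lemma sum_Icc_one_natCast {K : Type*} [Field K] [CharZero K] (N : ℕ) :
    ∑ j ∈ Icc 1 N, (j : K) = N * (N + 1) / 2 := by
  induction N with
  | zero => simp
  | succ n ih =>
    rw [sum_Icc_succ_top (Nat.le_add_left 1 n), ih]
    push_cast
    ring

lemma sum_Icc_one_natCast_sq {K : Type*} [Field K] [CharZero K] (N : ℕ) :
    ∑ j ∈ Icc 1 N, (j : K) ^ 2 = N * (N + 1) * (2 * N + 1) / 6 := by
  induction N with
  | zero => simp
  | succ n ih =>
    rw [sum_Icc_succ_top (Nat.le_add_left 1 n), ih]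
    push_cast
    ring

noncomputable def sumSqWeights (n : ℝ) : ℝ := (n + 1) * (2 * n + 1) / (6 * n)

noncomputable def sumCrossWeights (n : ℝ) : ℝ := (n + 1) * (3 * n + 2) * (n - 1) / (12 * n)

lemma sumSqWeights_eq (N : ℕ) :
    (1 / (N : ℝ) ^ 2) * ∑ j ∈ Icc 1 N, (j : ℝ) ^ 2 = sumSqWeights N := by
  rcases N.eq_zero_or_pos with rfl | hN
  · simp [sumSqWeights]
  · rw [sum_Icc_one_natCast_sq, sumSqWeights]
    field_simp

lemma sumCrossWeights_eq (N : ℕ) :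
    ((1 / (N : ℝ)) * ∑ j ∈ Icc 1 N, (j : ℝ)) ^ 2 - sumSqWeights N = sumCrossWeights N := by
  rcases N.eq_zero_or_pos with rfl | hN
  · simp [sumSqWeights, sumCrossWeights]
  · rw [sum_Icc_one_natCast, sumSqWeights, sumCrossWeights]
    field_simp
    ring

section Bounds

variable {n : ℝ}

lemma sumSqWeights_pos (hn : 0 < n) : 0 < sumSqWeights n := by
  unfold sumSqWeights
  positivity

lemma sumCrossWeights_nonneg (hn : 1 ≤ n) : 0 ≤ sumCrossWeights n := by
  unfold sumCrossWeights
  have : 0 ≤ n - 1 := sub_nonneg.2 hn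
  positivity

lemma sumSqWeights_le (hn : 1 ≤ n) : sumSqWeights n ≤ n := by
  rw [sumSqWeights, div_le_iff₀ (by positivity)]
  nlinarith

lemma lt_four_mul_sumSqWeights (hn : 0 < n) : n < 4 * sumSqWeights n := by
  rw [sumSqWeights, mul_div_assoc', lt_div_iff₀ (by positivity)]
  nlinarith

lemma sumCrossWeights_le (hn : 1 ≤ n) : sumCrossWeights n ≤ n ^ 2 - n := by
  rw [sumCrossWeights, div_le_iff₀ (by positivity)]
  nlinarith [mul_nonneg (sub_nonneg.2 hn) (sub_nonneg.2 hn)]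

lemma le_four_mul_sumCrossWeights (hn : 1 ≤ n) : n ^ 2 - n ≤ 4 * sumCrossWeights n := by
  rw [sumCrossWeights, mul_div_assoc', le_div_iff₀ (by positivity)]
  nlinarith [mul_nonneg (sub_nonneg.2 hn) (sub_nonneg.2 hn)]

end Bounds

/-- For `γ = 1` and any correlation `ρ ∈ [0,1]`, the variance ratio
`R₁(N) = (N + ρ(N² − N)) / (A + ρB)` with `A = (1/N²) Σ_{j=1}^N j²` and
`B = ((1/N) Σ_{j=1}^N j)² − A` satisfies `1 ≤ R₁(N) < 4` for all `N ≥ 1`. -/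
theorem variance_ratio_equicorrelated_bounds
    (N : ℕ) (hN : 1 ≤ N) (ρ : ℝ) (hρ : ρ ∈ Set.Icc (0 : ℝ) 1)
    (A B R : ℝ)
    (hA : A = (1 / (N : ℝ) ^ 2) * ∑ j ∈ Finset.Icc 1 N, (j : ℝ) ^ 2)
    (hB : B = ((1 / (N : ℝ)) * ∑ j ∈ Finset.Icc 1 N, (j : ℝ)) ^ 2 - A)
    (hR : R = ((N : ℝ) + ρ * ((N : ℝ) ^ 2 - (N : ℝ))) / (A + ρ * B)) :
    1 ≤ R ∧ R < 4 := by
  obtain ⟨hρ, -⟩ := hρ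
  have hn : (1 : ℝ) ≤ N := Nat.one_le_cast.mpr hN
  rw [sumSqWeights_eq] at hA
  rw [hA, sumCrossWeights_eq] at hB
  subst hA hB hR
  have hD : 0 < sumSqWeights N + ρ * sumCrossWeights N := by
    have := sumSqWeights_pos (zero_lt_one.trans_le hn)
    have := sumCrossWeights_nonneg hn
    positivity
  rw [le_div_iff₀ hD, one_mul, div_lt_iff₀ hD, mul_add, mul_left_comm]
  constructor
  · gcongr
    exacts [sumSqWeights_le hn, sumCrossWeights_le hn]
  · exact add_lt_add_of_lt_of_le (lt_four_mul_sumSqWeights (zero_lt_one.trans_le hn))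
      (mul_le_mul_of_nonneg_left (le_four_mul_sumCrossWeights hn) hρ)
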